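/- Let G be a linearly ordered abelian group, and S₁, S₂ nonprincipal final segments of G with trivial invariance groups 𝒢(S₁) = 𝒢(S₂) = {0}. Then S₁ + (S₂ − S₁ᶜ) = S₂, where S₂ − S₁ᶜ := {a − b : a ∈ S₂, b ∈ S₁ᶜ}. -/

import Mathlib

open Pointwise

/-- A final segment of a linearly ordered abelian group: a nonempty proper
upward-closed subset. -/
def IsFinalSegment {G : Type*} [AddCommGroup G] [LinearOrder G] [IsOrderedAddMonoid G] (S : Set G) : Prop :=
  S.Nonempty ∧ S ≠ Set.univ ∧ ∀ a ∈ S, ∀ b, a ≤ b → b ∈ S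

/-- The invariance group of a subset `M`: `𝒢(M) = {γ | M + γ = M}`. -/
def invGrp {G : Type*} [AddCommGroup G] [LinearOrder G] [IsOrderedAddMonoid G] (M : Set G) : Set G :=
  {γ | (fun m => m + γ) '' M = M}

/-
`S₁ + (S₂ - S₁ᶜ) ⊆ S₂` holds for any upper sets, since `s - b ≥ 0` for `s ∈ S₁`, `b ∉ S₁`.
Conversely, given `c ∈ S₂`, nonprincipality gives `a ∈ S₂` with `δ := c - a > 0`. As `-δ` is not in
the invariance group of `S₁`, the shift `S₁ - δ` differs from `S₁`, which for an upper set means that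
some `b ∉ S₁` has `b + δ ∈ S₁`; then `c = (b + δ) + (a - b)`.
-/

section

variable {G : Type*} [AddCommGroup G] [LinearOrder G] [IsOrderedAddMonoid G]

theorem IsFinalSegment.isUpperSet {S : Set G} (hS : IsFinalSegment S) : IsUpperSet S :=
  fun _ _ hab ha => hS.2.2 _ ha _ hab

theorem neg_mem_invGrp_of_add_mem {S : Set G} (hS : IsUpperSet S) {δ : G} (hδ : 0 ≤ δ)
    (h : ∀ b, b + δ ∈ S → b ∈ S) : -δ ∈ invGrp S := by
  change (fun m => m + -δ) '' S = S
  rw [Set.image_add_right, neg_neg]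
  ext x
  exact ⟨h x, fun hx => hS (le_add_of_nonneg_right hδ) hx⟩

theorem exists_notMem_add_mem_of_invGrp_eq_singleton_zero {S : Set G} (hS : IsUpperSet S)
    (hg : invGrp S = {0}) {δ : G} (hδ : 0 < δ) : ∃ b ∉ S, b + δ ∈ S := by
  by_contra! h
  have hmem := neg_mem_invGrp_of_add_mem hS hδ.le fun b hb => by_contra fun hbS => h b hbS hb
  rw [hg, Set.mem_singleton_iff, neg_eq_zero] at hmem
  exact hδ.ne' hmem

theorem add_sub_compl_subset {S₁ S₂ : Set G} (h₁ : IsUpperSet S₁) (h₂ : IsUpperSet S₂) :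
    S₁ + (S₂ - S₁ᶜ) ⊆ S₂ := by
  rintro _ ⟨s, hs, _, ⟨a, ha, b, hb, rfl⟩, rfl⟩
  have hbs : b ≤ s := le_of_not_ge fun hsb => hb (h₁ hsb hs)
  refine h₂ ?_ ha
  calc a ≤ a + (s - b) := le_add_of_nonneg_right (sub_nonneg.mpr hbs)
    _ = s + (a - b) := by abel

theorem subset_add_sub_compl {S₁ S₂ : Set G} (h₁ : IsUpperSet S₁) (hg₁ : invGrp S₁ = {0})
    (hnp₂ : ∀ t ∈ S₂, ∃ s ∈ S₂, s < t) : S₂ ⊆ S₁ + (S₂ - S₁ᶜ) := by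
  intro c hc
  obtain ⟨a, ha, hac⟩ := hnp₂ c hc
  obtain ⟨b, hb, hbδ⟩ := exists_notMem_add_mem_of_invGrp_eq_singleton_zero h₁ hg₁ (sub_pos.mpr hac)
  exact ⟨b + (c - a), hbδ, a - b, ⟨a, ha, b, hb, rfl⟩, show b + (c - a) + (a - b) = c by abel⟩

end

theorem add_sub_compl_eq_general {G : Type*} [AddCommGroup G] [LinearOrder G] [IsOrderedAddMonoid G]
    (S₁ S₂ : Set G) (h₁ : IsFinalSegment S₁) (h₂ : IsFinalSegment S₂)
    (hnp₂ : ∀ t ∈ S₂, ∃ s ∈ S₂, s < t)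
    (hg₁ : invGrp S₁ = {0}) :
    S₁ + (S₂ - S₁ᶜ) = S₂ :=
  (add_sub_compl_subset h₁.isUpperSet h₂.isUpperSet).antisymm
    (subset_add_sub_compl h₁.isUpperSet hg₁ hnp₂)

/-- If `S₁, S₂` are nonprincipal final segments with trivial invariance groups, then
`S₁ + (S₂ - S₁ᶜ) = S₂`. -/
theorem add_sub_compl_eq {G : Type*} [AddCommGroup G] [LinearOrder G] [IsOrderedAddMonoid G]
    (S₁ S₂ : Set G) (h₁ : IsFinalSegment S₁) (h₂ : IsFinalSegment S₂)
    (hnp₁ : ∀ t ∈ S₁, ∃ s ∈ S₁, s < t) (hnp₂ : ∀ t ∈ S₂, ∃ s ∈ S₂, s < t)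
    (hg₁ : invGrp S₁ = {0}) (hg₂ : invGrp S₂ = {0}) :
    S₁ + (S₂ - S₁ᶜ) = S₂ :=
  add_sub_compl_eq_general S₁ S₂ h₁ h₂ hnp₂ hg₁
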